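/- Let a be an integer, n ≥ 1 an integer, d = gcd(a, n), and m = n/d. Let Z = Z_n^{(a)} be the Chu sequence of length n with parameter a. Then for every integer u with 0 ≤ u < n one has |C_{Z,Z}(u)| = |C_{Z,Z}(−u)| = |Σ_{j=0}^{n−u−1} exp(2πi·(a/d)·u·j/m)|; in particular, if m does not divide u, then |C_{Z,Z}(u)| = |sin(π a u²/n) / sin(π a u/n)|. -/

import Mathlib

open Complex Real Filter Topology

noncomputable section

/-- Zero-extension of a (length `n`) sequence to all of `ℤ`: entries outside
`{0, ..., n-1}` are set to `0`. -/
def seqExt (n : ℕ) (A : ℤ → ℂ) : ℤ → ℂ := fun j => if 0 ≤ j ∧ j < (n : ℤ) then A j else 0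

/-- Aperiodic crosscorrelation of two sequences of length `n` at shift `u`:
`C_{A,B}(u) = ∑_{j ∈ ℤ} a_j * conj (b_{j+u})`.  Since the zero-extended entries
vanish outside `{0, ..., n-1}`, the sum over `ℤ` equals the sum over that range. -/
def corr (n : ℕ) (A B : ℤ → ℂ) (u : ℤ) : ℂ :=
  ∑ j ∈ Finset.Icc (0 : ℤ) ((n : ℤ) - 1), seqExt n A j * (starRingEnd ℂ) (seqExt n B (j + u))

/-- Crosscorrelation demerit factor `CDF(A,B)`.  The correlations vanish for
`|u| ≥ n`, so the sum over all `u ∈ ℤ` equals the sum over `-(n-1) ≤ u ≤ n-1`. -/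
def cdf (n : ℕ) (A B : ℤ → ℂ) : ℝ :=
  (∑ u ∈ Finset.Icc (-(n : ℤ) + 1) ((n : ℤ) - 1), ‖corr n A B u‖ ^ 2) /
    (‖corr n A A 0‖ * ‖corr n B B 0‖)

/-- Autocorrelation demerit factor `ADF(A)`. -/
def adf (n : ℕ) (A : ℤ → ℂ) : ℝ :=
  (∑ u ∈ Finset.Icc (-(n : ℤ) + 1) ((n : ℤ) - 1) \ {0}, ‖corr n A A u‖ ^ 2) /
    ‖corr n A A 0‖ ^ 2

/-- Pursley-Sarwate criterion `PSC(A,B)`. -/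
def psc (n : ℕ) (A B : ℤ → ℂ) : ℝ := Real.sqrt (adf n A * adf n B) + cdf n A B

/-- The Chu sequence of length `n` with parameter `a`: `z_j = exp(π i a j² / n)`. -/
def chu (n : ℕ) (a : ℤ) : ℤ → ℂ :=
  fun j => Complex.exp (Real.pi * Complex.I * (a : ℂ) * (j : ℂ) ^ 2 / (n : ℂ))

/-- Generalised Gauss sum `S_N(x, θ) = ∑_{j=1}^N exp(π i x j² + 2 π i θ j)`. -/
def gSum (N : ℕ) (x θ : ℝ) : ℂ :=
  ∑ j ∈ Finset.Icc 1 N,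
    Complex.exp (Real.pi * Complex.I * (x : ℂ) * (j : ℂ) ^ 2 +
      2 * Real.pi * Complex.I * (θ : ℂ) * (j : ℂ))

/-! Since `(j + u)² = j² + u² + 2ju`, the Chu sequence satisfies `z_{j+u} = z_j z_u ζ^j` with
`ζ = exp (2πi a u / n)`, and `|z_j| = 1`; hence `z_j conj z_{j+u} = conj (z_u ζ^j)`, and `|C(u)|`
is the modulus of the geometric sum `∑_{j < n-u} ζ^j`. Writing `ζ = exp (2iθ)` with
`θ = π a u / n`, this modulus is `|sin ((n-u)θ) / sin θ|`, where
`(n-u)θ = π a u - π a u² / n`. Moreover `a / n = (a/d) / m` with `a/d` coprime to `m`, so `sin θ = 0` forces `m ∣ u`. -/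

open ComplexConjugate

section Correlation

variable {n : ℕ} (A B : ℤ → ℂ)

lemma seqExt_eq_zero {j : ℤ} (h : ¬(0 ≤ j ∧ j < n)) : seqExt n A j = 0 := if_neg h

lemma seqExt_eq_self {j : ℤ} (h : 0 ≤ j ∧ j < n) : seqExt n A j = A j := if_pos h

lemma corr_eq_sum_of_subset {S : Finset ℤ} (hS : Finset.Icc 0 ((n : ℤ) - 1) ⊆ S) (u : ℤ) :
    corr n A B u = ∑ j ∈ S, seqExt n A j * conj (seqExt n B (j + u)) := by
  refine Finset.sum_subset hS fun j _ hj => ?_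
  rw [seqExt_eq_zero A (by rw [Finset.mem_Icc] at hj; omega), zero_mul]

lemma corr_neg (u : ℤ) : corr n A B (-u) = conj (corr n B A u) := by
  set N : ℤ := n + |u|
  have := le_abs_self u
  have := neg_abs_le u
  have hN : Finset.Icc 0 ((n : ℤ) - 1) ⊆ Finset.Icc (-N) N :=
    Finset.Icc_subset_Icc (by omega) (by omega)
  have hN' : Finset.Icc 0 ((n : ℤ) - 1) ⊆ (Finset.Icc (-N) N).map (addRightEmbedding (-u)) := by
    rw [Finset.map_add_right_Icc]
    exact Finset.Icc_subset_Icc (by omega) (by omega)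
  rw [corr_eq_sum_of_subset A B hN, corr_eq_sum_of_subset B A hN', Finset.sum_map, map_sum]
  refine Finset.sum_congr rfl fun j _ => ?_
  simp only [addRightEmbedding_apply, neg_add_cancel_right, map_mul, conj_conj]
  ring

lemma corr_natCast (u : ℕ) :
    corr n A B u = ∑ j ∈ Finset.range (n - u), A j * conj (B (j + u)) := by
  have hsub : (Finset.range (n - u)).map Nat.castEmbedding ⊆ Finset.Icc 0 ((n : ℤ) - 1) := by
    intro j hj
    simp only [Finset.mem_map, Finset.mem_range, Nat.castEmbedding_apply] at hj
    obtain ⟨k, hk, rfl⟩ := hj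
    rw [Finset.mem_Icc]
    omega
  rw [corr, ← Finset.sum_subset hsub, Finset.sum_map]
  · refine Finset.sum_congr rfl fun j hj => ?_
    rw [Finset.mem_range] at hj
    simp only [Nat.castEmbedding_apply]
    rw [seqExt_eq_self A (by omega), seqExt_eq_self B (by omega)]
  · intro j hj hj'
    simp only [Finset.mem_map, Finset.mem_range, Nat.castEmbedding_apply, not_exists,
      not_and] at hj'
    rw [Finset.mem_Icc] at hj
    rw [seqExt_eq_zero B (j := j + u) (fun h => hj' j.toNat (by omega) (by omega)), map_zero,
      mul_zero]

end Correlation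


section Trigonometric

lemma norm_exp_two_mul_mul_I_sub_one (x : ℝ) : ‖exp (2 * x * I) - 1‖ = 2 * |Real.sin x| := by
  rw [show (2 * x * I : ℂ) = I * ((2 * x : ℝ) : ℂ) by push_cast; ring,
    norm_exp_I_mul_ofReal_sub_one, norm_mul, Real.norm_two, Real.norm_eq_abs,
    mul_div_cancel_left₀ _ two_ne_zero]

lemma norm_sum_range_exp_two_mul_mul_I (θ : ℝ) (N : ℕ) (hθ : Real.sin θ ≠ 0) :
    ‖∑ j ∈ Finset.range N, exp (2 * θ * j * I)‖ = |Real.sin (N * θ) / Real.sin θ| := by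
  set r := exp (2 * θ * I)
  have hr : r ≠ 1 := fun h => by
    have := norm_exp_two_mul_mul_I_sub_one θ
    rw [← show r = exp (2 * θ * I) from rfl, h, sub_self, norm_zero] at this
    exact hθ (abs_eq_zero.1 (by linarith))
  have hpow : ∀ k : ℕ, exp (2 * θ * k * I) = r ^ k := fun k => by
    rw [← Complex.exp_nat_mul]; ring_nf
  have hN : r ^ N = exp (2 * ((N * θ : ℝ) : ℂ) * I) := by rw [← hpow]; push_cast; ring_nf
  simp only [hpow]
  rw [geom_sum_eq hr, norm_div, hN, norm_exp_two_mul_mul_I_sub_one,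
    norm_exp_two_mul_mul_I_sub_one, abs_div]
  field_simp

end Trigonometric

section Arithmetic

lemma intCast_ediv_gcd_div_natCast_div_gcd {K : Type*} [Field K] [CharZero K] (a : ℤ) (n : ℕ) :
    ((a / Int.gcd a n : ℤ) : K) / ((n / Int.gcd a n : ℕ) : K) = a / n := by
  rcases Nat.eq_zero_or_pos (Int.gcd a n) with h | h
  · obtain ⟨rfl, hn⟩ := Int.gcd_eq_zero_iff.1 h
    simp
  · have hg : ((Int.gcd a n : ℕ) : K) ≠ 0 := by exact_mod_cast h.ne'
    rw [Int.cast_div (Int.gcd_dvd_left a n) (by exact_mod_cast hg),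
      Nat.cast_div (by exact_mod_cast Int.gcd_dvd_right a n) hg]
    push_cast
    exact div_div_div_cancel_right₀ hg _ _

lemma sin_pi_mul_div_ne_zero {b u : ℤ} {m : ℕ} (hm : m ≠ 0) (hb : Int.gcd m b = 1)
    (hu : ¬ (m : ℤ) ∣ u) : Real.sin (π * b * u / m) ≠ 0 := by
  intro hs
  obtain ⟨k, hk⟩ := Real.sin_eq_zero_iff.1 hs
  field_simp at hk
  have hdvd : (m : ℤ) ∣ b * u := ⟨k, by rw [mul_comm (m : ℤ)]; exact_mod_cast hk.symm⟩
  exact hu (Int.dvd_of_dvd_mul_right_of_gcd_one hdvd hb)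

lemma sin_pi_mul_div_ne_zero_of_not_dvd {a u : ℤ} {n : ℕ} (hn : n ≠ 0)
    (hu : ¬ ((n / Int.gcd a n : ℕ) : ℤ) ∣ u) : Real.sin (π * a * u / n) ≠ 0 := by
  have hg : 0 < Int.gcd a n := Int.gcd_pos_of_ne_zero_right _ (by exact_mod_cast hn)
  have hcop : Int.gcd ((n / Int.gcd a n : ℕ) : ℤ) (a / Int.gcd a n) = 1 := by
    rw [Int.gcd_comm, Int.natCast_div]
    exact Int.gcd_div_gcd_div_gcd hg
  have hgn : Int.gcd a n ≤ n :=
    Nat.le_of_dvd (Nat.pos_of_ne_zero hn) (by exact_mod_cast Int.gcd_dvd_right a n)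
  have hm : n / Int.gcd a n ≠ 0 := (Nat.div_pos hgn hg).ne'
  convert sin_pi_mul_div_ne_zero hm hcop hu using 2
  linear_combination (-(π * u)) * intCast_ediv_gcd_div_natCast_div_gcd (K := ℝ) a n

end Arithmetic

section Chu

lemma chu_mul_conj_chu_add (n : ℕ) (a j u : ℤ) :
    chu n a j * conj (chu n a (j + u)) = conj (chu n a u * exp (2 * π * I * a * u * j / n)) := by
  rw [chu, chu, chu, ← Complex.exp_add, ← exp_conj, ← exp_conj, ← Complex.exp_add]
  congr 1
  simp only [map_add, map_div₀, map_mul, map_pow, conj_ofReal, conj_I, map_intCast, map_natCast,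
    map_ofNat]
  push_cast
  ring

lemma norm_chu (n : ℕ) (a j : ℤ) : ‖chu n a j‖ = 1 := by
  rw [chu, show (π : ℂ) * I * a * (j : ℂ) ^ 2 / n = ((π * a * j ^ 2 / n : ℝ) : ℂ) * I by
    push_cast; ring]
  exact norm_exp_ofReal_mul_I _

lemma norm_corr_chu (a : ℤ) (n u : ℕ) :
    ‖corr n (chu n a) (chu n a) u‖ =
      ‖∑ j ∈ Finset.range (n - u), exp (2 * π * I * a * u * j / n)‖ := by
  simp only [corr_natCast, chu_mul_conj_chu_add, ← map_sum, norm_conj, ← Finset.mul_sum,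
    norm_mul, norm_chu, one_mul, Int.cast_natCast]

lemma norm_corr_chu_eq_abs_sin_div (a : ℤ) (n u : ℕ) (hu : u ≤ n)
    (hsin : Real.sin (π * a * u / n) ≠ 0) :
    ‖corr n (chu n a) (chu n a) u‖ =
      |Real.sin (π * a * u ^ 2 / n) / Real.sin (π * a * u / n)| := by
  have hn : (n : ℝ) ≠ 0 := fun hn => hsin (by simp [hn])
  have hexp (j : ℕ) :
      exp (2 * π * I * a * u * j / n) = exp (2 * (π * a * u / n : ℝ) * j * I) := by
    push_cast; ring_nf
  have hangle : ((n - u : ℕ) : ℝ) * (π * a * u / n) = (a * u : ℤ) * π - π * a * u ^ 2 / n := by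
    push_cast [Nat.cast_sub hu]
    field_simp
  rw [norm_corr_chu, Finset.sum_congr rfl fun j _ => hexp j,
    norm_sum_range_exp_two_mul_mul_I _ _ hsin, hangle, Real.sin_int_mul_pi_sub, abs_div, abs_div,
    abs_neg, abs_mul, abs_neg_one_zpow, one_mul]

end Chu

theorem chu_autocorrelation_general (a : ℤ) (n : ℕ) (d m : ℕ)
    (hd : d = Int.gcd a n) (hm : m = n / d) (u : ℕ) (hu : u < n) :
    ‖corr n (chu n a) (chu n a) u‖ =
      ‖corr n (chu n a) (chu n a) (-(u : ℤ))‖ ∧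
    ‖corr n (chu n a) (chu n a) u‖ =
      ‖∑ j ∈ Finset.range (n - u),
        Complex.exp (2 * Real.pi * Complex.I * ((a / (d : ℤ) : ℤ) : ℂ) * (u : ℂ) * (j : ℂ) / (m : ℂ))‖ ∧
    (¬ ((m : ℤ) ∣ (u : ℤ)) →
      ‖corr n (chu n a) (chu n a) u‖ =
        |Real.sin (Real.pi * a * u ^ 2 / n) / Real.sin (Real.pi * a * u / n)|) := by
  subst hd hm
  have hslope : ((a / Int.gcd a n : ℤ) : ℂ) / ((n / Int.gcd a n : ℕ) : ℂ) = a / n :=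
    intCast_ediv_gcd_div_natCast_div_gcd a n
  refine ⟨by rw [corr_neg, norm_conj], ?_, fun hdvd => ?_⟩
  · rw [norm_corr_chu]
    congr 1
    refine Finset.sum_congr rfl fun j _ => ?_
    congr 1
    linear_combination -(2 * π * I * u * j) * hslope
  · exact norm_corr_chu_eq_abs_sin_div a n u hu.le
      (sin_pi_mul_div_ne_zero_of_not_dvd (by omega) hdvd)

/-- the magnitudes of the aperiodic autocorrelations of a Chu sequence. -/
theorem chu_autocorrelation (a : ℤ) (n : ℕ) (hn : 1 ≤ n) (d m : ℕ)
    (hd : d = Int.gcd a n) (hm : m = n / d) (u : ℕ) (hu : u < n) :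
    ‖corr n (chu n a) (chu n a) u‖ =
      ‖corr n (chu n a) (chu n a) (-(u : ℤ))‖ ∧
    ‖corr n (chu n a) (chu n a) u‖ =
      ‖∑ j ∈ Finset.range (n - u),
        Complex.exp (2 * Real.pi * Complex.I * ((a / (d : ℤ) : ℤ) : ℂ) * (u : ℂ) * (j : ℂ) / (m : ℂ))‖ ∧
    (¬ ((m : ℤ) ∣ (u : ℤ)) →
      ‖corr n (chu n a) (chu n a) u‖ =
        |Real.sin (Real.pi * a * u ^ 2 / n) / Real.sin (Real.pi * a * u / n)|) :=
  chu_autocorrelation_general a n d m hd hm u hu
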